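/- Let q ≥ 2 be an even integer and set N = q³ − 1, M = q² + q + 1. Let S be the set of residues i with 1 ≤ i ≤ N − 1 and M ∤ i. Then S has exactly q³ − q elements, S is stable under multiplication by −1 and by q modulo N, the group {±1, ±q, ±q²} ⊆ (ℤ/Nℤ)× has order 6 and acts on S with all orbits of size exactly 6, and hence the number of orbits equals q(q² − 1)/6. -/

import Mathlib

/-!
Let `Q` be the class of `q` modulo `N = q³ - 1` and `M = q² + q + 1`, so that `N = (q - 1) M`.
Then `M ∣ i` iff `(Q - 1) i = 0`, so `S = {x | (Q - 1) x ≠ 0}` is stable under units and misses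
exactly the `q - 1` multiples of `M`. Since `Q³ = 1`, the set `{±1, ±Q, ±Q²}` consists of the
powers of `-Q`, which has order 6. As `N` is odd, `2` is a unit, hence so are
`Q + 1` (because `(Q + 1)(Q² - Q + 1) = 2`) and `Q² + 1` (because `(Q² + 1) Q = Q + 1`); thus for
every `g ≠ 1` in the group, `g - 1` is a unit multiple of `1` or of `Q - 1`, and the action on `S`
is free. The `q³ - q` elements of `S` therefore fall into orbits of size 6.
-/

/-- The set of residues modulo `q³ - 1` not divisible by `q² + q + 1`. -/
def stmt7S (q : ℕ) : Set (ZMod (q ^ 3 - 1)) :=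
  {x | ¬ (q ^ 2 + q + 1) ∣ x.val}

/-- The subgroup `{±1, ±q, ±q²}` of units modulo `q³ - 1`, as a finset of residues. -/
def stmt7H (q : ℕ) : Finset (ZMod (q ^ 3 - 1)) :=
  {1, -1, (q : ZMod (q ^ 3 - 1)), -(q : ZMod (q ^ 3 - 1)),
    (q : ZMod (q ^ 3 - 1)) ^ 2, -((q : ZMod (q ^ 3 - 1)) ^ 2)}

open Finset

section OrbitCount

variable {M : Type*} [Monoid M] [DecidableEq M] {H : Finset M}

lemma pow_mem_image_range_pow {ζ : M} {n : ℕ} (hn : 0 < n) (hζ : ζ ^ n = 1) (k : ℕ) :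
    ζ ^ k ∈ (range n).image (ζ ^ ·) :=
  mem_image.2 ⟨k % n, mem_range.2 (Nat.mod_lt k hn), (pow_eq_pow_mod k hζ).symm⟩

variable (hmul : ∀ a ∈ H, ∀ b ∈ H, a * b ∈ H) (hinv : ∀ a ∈ H, ∃ b ∈ H, b * a = 1)
include hmul hinv

lemma image_mul_right_eq_of_mem {x y : M} (hy : y ∈ H.image (· * x)) :
    H.image (· * y) = H.image (· * x) := by
  obtain ⟨h, hh, rfl⟩ := mem_image.1 hy
  obtain ⟨h', hh', hh'h⟩ := hinv h hh
  ext z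
  simp only [mem_image]
  constructor
  · rintro ⟨g, hg, rfl⟩
    exact ⟨g * h, hmul g hg h hh, mul_assoc g h x⟩
  · rintro ⟨g, hg, rfl⟩
    refine ⟨g * h', hmul g hg h' hh', ?_⟩
    simp only [mul_assoc, ← mul_assoc h' h x, hh'h, one_mul]

lemma card_image_mul_right {x : M} (hfree : ∀ g ∈ H, g * x = x → g = 1) :
    (H.image (· * x)).card = H.card := by
  refine card_image_of_injOn fun a ha b hb hab => ?_
  obtain ⟨a', ha', ha'a⟩ := hinv a ha
  obtain ⟨a'', -, ha''a'⟩ := hinv a' ha'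
  have ha'b : a' * b = 1 := hfree _ (hmul a' ha' b hb) <| by
    rw [mul_assoc, ← show a * x = b * x from hab, ← mul_assoc, ha'a, one_mul]
  calc a = a'' * a' * a := by rw [ha''a', one_mul]
    _ = a'' * a' * b := by rw [mul_assoc, ha'a, mul_assoc, ha'b]
    _ = b := by rw [ha''a', one_mul]

lemma ncard_orbits_mul_card {S : Set M} (hS : S.Finite) (h1 : 1 ∈ H)
    (hstab : ∀ g ∈ H, ∀ x ∈ S, g * x ∈ S)
    (hfree : ∀ x ∈ S, ∀ g ∈ H, g * x = x → g = 1) :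
    {A : Finset M | ∃ x ∈ S, A = H.image (· * x)}.ncard * H.card = S.ncard := by
  lift S to Finset M using hS
  have horbits : {A : Finset M | ∃ x ∈ (S : Set M), A = H.image (· * x)} =
      ↑(S.image fun x => H.image (· * x)) := by
    ext A
    simp [eq_comm]
  rw [horbits, Set.ncard_coe_finset, Set.ncard_coe_finset,
    card_eq_sum_card_image (fun x => H.image (· * x)) S]
  refine (sum_const_nat ?_).symm
  simp only [mem_image]
  rintro _ ⟨x, hx, rfl⟩
  have hfiber :
      {y ∈ S | H.image (· * y) = H.image (· * x)} = H.image (· * x) := by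
    ext y
    simp only [mem_filter]
    refine ⟨fun ⟨_, hy⟩ => hy ▸ mem_image.2 ⟨1, h1, one_mul y⟩,
      fun hy => ⟨?_, ?_⟩⟩
    · obtain ⟨g, hg, rfl⟩ := mem_image.1 hy
      exact hstab g hg x hx
    · exact image_mul_right_eq_of_mem hmul hinv hy
  rw [hfiber, card_image_mul_right hmul hinv (hfree x hx)]

end OrbitCount

section CubeRootOfUnity

variable {R : Type*} [CommRing R] {Q : R}

lemma neg_pow_three (hQ : Q ^ 3 = 1) : (-Q) ^ 3 = -1 := by
  rw [neg_pow, hQ]; ring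

lemma neg_pow_six (hQ : Q ^ 3 = 1) : (-Q) ^ 6 = 1 := by
  rw [show (-Q) ^ 6 = (Q ^ 3) ^ 2 by ring, hQ, one_pow]

lemma isUnit_add_one (hQ : Q ^ 3 = 1) (h2 : IsUnit (2 : R)) : IsUnit (Q + 1) :=
  isUnit_of_mul_isUnit_left (y := Q ^ 2 - Q + 1) <| by
    rwa [show (Q + 1) * (Q ^ 2 - Q + 1) = Q ^ 3 + 1 by ring, hQ, one_add_one_eq_two]

lemma isUnit_sq_add_one (hQ : Q ^ 3 = 1) (h2 : IsUnit (2 : R)) : IsUnit (Q ^ 2 + 1) :=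
  isUnit_of_mul_isUnit_left (y := Q) <| by
    rw [show (Q ^ 2 + 1) * Q = Q ^ 3 + Q by ring, hQ, add_comm]
    exact isUnit_add_one hQ h2

end CubeRootOfUnity

section PlusMinusPowers

variable {R : Type*} [CommRing R] [DecidableEq R] {Q : R}

def plusMinusPowers (Q : R) : Finset R := {1, -1, Q, -Q, Q ^ 2, -Q ^ 2}

lemma plusMinusPowers_eq_image_pow (hQ : Q ^ 3 = 1) :
    plusMinusPowers Q = (range 6).image ((-Q) ^ ·) := by
  have h4 : (-Q) ^ 4 = Q := by rw [pow_succ, neg_pow_three hQ]; ring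
  have h5 : (-Q) ^ 5 = -Q ^ 2 := by rw [pow_succ, pow_succ, neg_pow_three hQ]; ring
  ext x
  simp only [plusMinusPowers, range_add_one, range_zero, image_insert, image_empty, mem_insert,
    mem_singleton, neg_pow_three hQ, h4, h5, neg_sq, pow_one, pow_zero]
  tauto

lemma one_mem_plusMinusPowers : (1 : R) ∈ plusMinusPowers Q := by
  simp [plusMinusPowers]

lemma mul_mem_plusMinusPowers (hQ : Q ^ 3 = 1) : ∀ a ∈ plusMinusPowers Q,
    ∀ b ∈ plusMinusPowers Q, a * b ∈ plusMinusPowers Q := by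
  simp only [plusMinusPowers_eq_image_pow hQ, forall_mem_image, ← pow_add]
  exact fun i _ j _ => pow_mem_image_range_pow (by norm_num) (neg_pow_six hQ) _

lemma exists_mul_eq_one_of_mem_plusMinusPowers (hQ : Q ^ 3 = 1) : ∀ a ∈ plusMinusPowers Q,
    ∃ b ∈ plusMinusPowers Q, b * a = 1 := by
  simp only [plusMinusPowers_eq_image_pow hQ, forall_mem_image]
  refine fun i _ => ⟨_, pow_mem_image_range_pow (by norm_num) (neg_pow_six hQ) (5 * i), ?_⟩
  rw [← pow_add, show 5 * i + i = 6 * i by ring, pow_mul, neg_pow_six hQ, one_pow]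

lemma card_plusMinusPowers (hQ : Q ^ 3 = 1) (h2 : IsUnit (2 : R)) (hQ1 : Q ≠ 1) :
    (plusMinusPowers Q).card = 6 := by
  have horder : orderOf (-Q) = 6 := by
    refine orderOf_eq_of_pow_and_pow_div_prime (by norm_num) (neg_pow_six hQ)
      fun p hp hp6 => ?_
    have : Nontrivial R := nontrivial_of_ne Q 1 hQ1
    obtain rfl | rfl : p = 2 ∨ p = 3 := by
      have := Nat.le_of_dvd (by norm_num) hp6
      interval_cases p <;> tauto
    · rw [show 6 / 2 = 3 by rfl, neg_pow_three hQ]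
      exact fun h => h2.ne_zero (by linear_combination -h)
    · rw [show 6 / 3 = 2 by rfl, neg_sq]
      exact fun h => hQ1 (by linear_combination hQ - Q * h)
  have hinj : Set.InjOn ((-Q) ^ ·) (range 6 : Set ℕ) := by
    rw [coe_range, ← horder]
    exact pow_injOn_Iio_orderOf
  rw [plusMinusPowers_eq_image_pow hQ, card_image_of_injOn hinj, card_range]

lemma eq_one_of_mem_plusMinusPowers_of_mul_eq_self (hQ : Q ^ 3 = 1) (h2 : IsUnit (2 : R))
    {x g : R} (hx : (Q - 1) * x ≠ 0) (hg : g ∈ plusMinusPowers Q) (hgx : g * x = x) :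
    g = 1 := by
  have hx0 : x ≠ 0 := by rintro rfl; simp at hx
  simp only [plusMinusPowers, mem_insert, mem_singleton] at hg
  rcases hg with rfl | rfl | rfl | rfl | rfl | rfl
  · rfl
  · exact absurd ((h2.mul_right_eq_zero).1 (by linear_combination -hgx)) hx0
  · exact absurd (by linear_combination hgx) hx
  · exact absurd ((isUnit_add_one hQ h2).mul_right_eq_zero.1 (by linear_combination -hgx)) hx0
  · exact absurd ((isUnit_add_one hQ h2).mul_right_eq_zero.1 (by linear_combination hgx)) hx
  · exact absurd ((isUnit_sq_add_one hQ h2).mul_right_eq_zero.1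
      (by linear_combination -hgx)) hx0

end PlusMinusPowers

section ZModDvd

variable {n d m : ℕ} [NeZero n]

lemma dvd_val_iff_natCast_mul_eq_zero (hn : d * m = n) (hd : 0 < d) (x : ZMod n) :
    m ∣ x.val ↔ (d : ZMod n) * x = 0 := by
  subst hn
  have hcast : (d : ZMod (d * m)) * x = ((d * x.val : ℕ) : ZMod (d * m)) := by
    rw [Nat.cast_mul, ZMod.natCast_zmod_val]
  rw [hcast, ZMod.natCast_eq_zero_iff, Nat.mul_dvd_mul_iff_left hd]

lemma card_filter_dvd_val (hn : d * m = n) : #{x : ZMod n | m ∣ x.val} = d := by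
  subst hn
  have hm : 0 < m := Nat.pos_of_ne_zero fun h => NeZero.ne (d * m) (by rw [h, mul_zero])
  have hlt {k : ℕ} (hk : k < d) : k * m < d * m := Nat.mul_lt_mul_of_pos_right hk hm
  refine (card_nbij' (fun x => x.val / m) (fun k => ((k * m : ℕ) : ZMod (d * m)))
    ?_ ?_ ?_ ?_).trans (card_range d)
  · intro x _
    exact mem_range.2 (Nat.div_lt_of_lt_mul (mul_comm d m ▸ ZMod.val_lt x))
  · intro k hk
    simp only [coe_filter, mem_univ, true_and, Set.mem_ofPred_eq]
    rw [ZMod.val_cast_of_lt (hlt (mem_range.1 hk))]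
    exact dvd_mul_left m k
  · intro x hx
    simp only [coe_filter, mem_univ, true_and, Set.mem_ofPred_eq] at hx
    simp only [Nat.div_mul_cancel hx, ZMod.natCast_zmod_val]
  · intro k hk
    simp only [ZMod.val_cast_of_lt (hlt (mem_range.1 hk)), Nat.mul_div_cancel k hm]

end ZModDvd

section CubeMinusOne

lemma sub_one_mul_sq_add_add_one (q : ℕ) : (q - 1) * (q ^ 2 + q + 1) = q ^ 3 - 1 := by
  rcases q with _ | q
  · rfl
  · rw [Nat.add_sub_cancel]
    exact (Nat.sub_eq_of_eq_add (by ring)).symm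

variable {q : ℕ}

lemma natCast_pow_three_eq_one (hq : 1 ≤ q) : (q : ZMod (q ^ 3 - 1)) ^ 3 = 1 := by
  have h := ZMod.natCast_self (q ^ 3 - 1)
  rwa [Nat.cast_sub (Nat.one_le_pow 3 q hq), Nat.cast_pow, Nat.cast_one, sub_eq_zero] at h

lemma natCast_ne_one (hq : 2 ≤ q) : (q : ZMod (q ^ 3 - 1)) ≠ 1 := by
  intro h
  have hdvd : q ^ 3 - 1 ∣ q - 1 := by
    rw [← ZMod.natCast_eq_zero_iff, Nat.cast_sub (by omega), h, Nat.cast_one, sub_self]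
  have : q < q ^ 3 := lt_self_pow₀ (by omega) (by norm_num)
  have := Nat.le_of_dvd (by omega) hdvd
  omega

lemma isUnit_two_zmod_pow_three_sub_one (hq : q ≠ 0) (hqe : Even q) :
    IsUnit (2 : ZMod (q ^ 3 - 1)) := by
  have hodd : Odd (q ^ 3 - 1) := Nat.Even.sub_odd (Nat.one_le_pow 3 q (Nat.pos_of_ne_zero hq))
    (hqe.pow_of_ne_zero three_ne_zero) odd_one
  exact_mod_cast (ZMod.isUnit_iff_coprime 2 _).2 (Nat.coprime_two_left.2 hodd)

variable [NeZero (q ^ 3 - 1)]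

lemma mem_stmt7S_iff (hq : 2 ≤ q) (x : ZMod (q ^ 3 - 1)) :
    x ∈ stmt7S q ↔ ((q : ZMod (q ^ 3 - 1)) - 1) * x ≠ 0 := by
  rw [stmt7S, Set.mem_ofPred_eq,
    dvd_val_iff_natCast_mul_eq_zero (sub_one_mul_sq_add_add_one q) (by omega),
    Nat.cast_sub (by omega), Nat.cast_one]

lemma ncard_stmt7S (hq : 1 ≤ q) : (stmt7S q).ncard = q ^ 3 - q := by
  have hcard := card_filter_add_card_filter_not (s := (univ : Finset (ZMod (q ^ 3 - 1))))
    fun x => (q ^ 2 + q + 1) ∣ x.val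
  rw [card_filter_dvd_val (sub_one_mul_sq_add_add_one q), card_univ, ZMod.card] at hcard
  have hS : stmt7S q = ↑({x | ¬ (q ^ 2 + q + 1) ∣ x.val} : Finset (ZMod (q ^ 3 - 1))) := by
    ext; simp [stmt7S]
  rw [hS, Set.ncard_coe_finset]
  omega

end CubeMinusOne

theorem stmt_7 (q : ℕ) (hq : 2 ≤ q) (hqe : Even q) :
    (stmt7S q).ncard = q ^ 3 - q ∧
    (∀ x ∈ stmt7S q, -x ∈ stmt7S q ∧ (q : ZMod (q ^ 3 - 1)) * x ∈ stmt7S q) ∧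
    (stmt7H q).card = 6 ∧
    (∀ a ∈ stmt7H q, ∀ b ∈ stmt7H q, a * b ∈ stmt7H q) ∧
    (∀ x ∈ stmt7S q, ((stmt7H q).image (· * x)).card = 6) ∧
    {A : Finset (ZMod (q ^ 3 - 1)) |
        ∃ x ∈ stmt7S q, A = (stmt7H q).image (· * x)}.ncard = q * (q ^ 2 - 1) / 6 := by
  have : NeZero (q ^ 3 - 1) :=
    ⟨by have : q < q ^ 3 := lt_self_pow₀ (by omega) (by norm_num); omega⟩
  set Q := (q : ZMod (q ^ 3 - 1))
  have hQ : Q ^ 3 = 1 := natCast_pow_three_eq_one (by omega)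
  have h2 := isUnit_two_zmod_pow_three_sub_one (by omega) hqe
  have hH : stmt7H q = plusMinusPowers Q := rfl
  have hmul := mul_mem_plusMinusPowers hQ
  have hinv := exists_mul_eq_one_of_mem_plusMinusPowers hQ
  have hcard := card_plusMinusPowers hQ h2 (natCast_ne_one hq)
  have hstab : ∀ g ∈ plusMinusPowers Q, ∀ x ∈ stmt7S q, g * x ∈ stmt7S q := by
    intro g hg x hx
    obtain ⟨g', -, hg'g⟩ := hinv g hg
    rw [mem_stmt7S_iff hq] at hx ⊢
    rwa [mul_left_comm, Ne, (IsUnit.of_mul_eq_one_right g' hg'g).mul_right_eq_zero]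
  have hfree : ∀ x ∈ stmt7S q, ∀ g ∈ plusMinusPowers Q, g * x = x → g = 1 := fun x hx _ =>
    eq_one_of_mem_plusMinusPowers_of_mul_eq_self hQ h2 ((mem_stmt7S_iff hq x).1 hx)
  have horbits :=
    ncard_orbits_mul_card hmul hinv (Set.toFinite _) one_mem_plusMinusPowers hstab hfree
  rw [hcard, ncard_stmt7S (by omega)] at horbits
  rw [hH]
  refine ⟨ncard_stmt7S (by omega), fun x hx => ⟨?_, hstab Q (by simp [plusMinusPowers]) x hx⟩,
    hcard, hmul, fun x hx => (card_image_mul_right hmul hinv (hfree x hx)).trans hcard, ?_⟩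
  · simpa using hstab (-1) (by simp [plusMinusPowers]) x hx
  · refine (Nat.div_eq_of_eq_mul_left (by norm_num) ?_).symm
    rw [horbits, Nat.mul_sub_one, ← pow_succ']
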